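/- Let f : {−1,1}^n → {−1,1} be a Boolean function, S ⊆ [n] be non-empty and r = |S|. Then Inf_S(f) ≥ 2^{−(r−1)} · |f̂(S)|. -/

import Mathlib

open Finset MeasureTheory
open scoped BigOperators Classical

/-- Expectation over the uniform measure on the hypercube `{-1,1}^n` (coded by `Bool`). -/
noncomputable def expectation {n : ℕ} (f : (Fin n → Bool) → ℝ) : ℝ :=
  (∑ x : Fin n → Bool, f x) / 2 ^ n

/-- Probability of an event under the uniform measure on the hypercube. -/
noncomputable def pr {n : ℕ} (P : (Fin n → Bool) → Prop) : ℝ :=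
  expectation (fun x => if P x then (1 : ℝ) else 0)

/-- Walsh function `χ_S`. -/
noncomputable def walsh {n : ℕ} (S : Finset (Fin n)) (x : Fin n → Bool) : ℝ :=
  ∏ j ∈ S, (if x j then (1 : ℝ) else -1)

/-- Fourier--Walsh coefficient `f̂(S)`. -/
noncomputable def fwCoeff {n : ℕ} (f : (Fin n → Bool) → ℝ) (S : Finset (Fin n)) : ℝ :=
  expectation (fun x => f x * walsh S x)

/-- T-influence `Inf_S(f) = ∑_{T ⊇ S} f̂(T)^2`. -/
noncomputable def TInf {n : ℕ} (f : (Fin n → Bool) → ℝ) (S : Finset (Fin n)) : ℝ :=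
  ∑ T ∈ Finset.univ.filter (fun T : Finset (Fin n) => S ⊆ T), fwCoeff f T ^ 2

/-- Fourier weight at degrees `≥ d`. -/
noncomputable def Wge {n : ℕ} (d : ℕ) (f : (Fin n → Bool) → ℝ) : ℝ :=
  ∑ T ∈ Finset.univ.filter (fun T : Finset (Fin n) => d ≤ T.card), fwCoeff f T ^ 2

/-- Flip coordinate `i`. -/
def flipBit {n : ℕ} (y : Fin n → Bool) (i : Fin n) : Fin n → Bool :=
  Function.update y i (!(y i))

/-- `i` is `S`-pivotal for `f` on input `x`. -/
def pivotal {n : ℕ} (f : (Fin n → Bool) → ℝ) (S : Finset (Fin n)) (i : Fin n)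
    (x : Fin n → Bool) : Prop :=
  ∃ y : Fin n → Bool, (∀ j, j ∉ S → y j = x j) ∧ f y ≠ f (flipBit y i)

/-- Joint influence `JInf_S(f)`. -/
noncomputable def JInf {n : ℕ} (f : (Fin n → Bool) → ℝ) (S : Finset (Fin n)) : ℝ :=
  pr (fun x => ∀ i ∈ S, pivotal f S i x)

/-- Single-bit discrete partial derivative. -/
noncomputable def deriv1 {n : ℕ} (i : Fin n) (f : (Fin n → Bool) → ℝ) :
    (Fin n → Bool) → ℝ :=
  fun x => (f (Function.update x i true) - f (Function.update x i false)) / 2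

/-- Multi-bit discrete partial derivative `∂_S f`. -/
noncomputable def derivS {n : ℕ} (S : Finset (Fin n)) (f : (Fin n → Bool) → ℝ) :
    (Fin n → Bool) → ℝ :=
  S.toList.foldr deriv1 f

/-- Heat semigroup `P_t`. -/
noncomputable def heat {n : ℕ} (t : ℝ) (g : (Fin n → Bool) → ℝ) : (Fin n → Bool) → ℝ :=
  fun x => ∑ S : Finset (Fin n), Real.exp (-(S.card : ℝ) * t) * fwCoeff g S * walsh S x

/-- Squared `L²` norm. -/
noncomputable def norm2sq {n : ℕ} (g : (Fin n → Bool) → ℝ) : ℝ :=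
  expectation (fun x => g x ^ 2)

/-- Total influence. -/
noncomputable def totinf {n : ℕ} (f : (Fin n → Bool) → ℝ) : ℝ :=
  ∑ i : Fin n, TInf f {i}


section Aux
open scoped symmDiff

variable {n : ℕ}

lemma expectation_sum {α : Type*} (A : Finset α) (F : α → (Fin n → Bool) → ℝ) :
    expectation (fun x => ∑ t ∈ A, F t x) = ∑ t ∈ A, expectation (F t) := by
  unfold expectation
  rw [Finset.sum_comm, Finset.sum_div]

lemma expectation_const_mul (c : ℝ) (g : (Fin n → Bool) → ℝ) :
    expectation (fun x => c * g x) = c * expectation g := by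
  unfold expectation
  rw [← Finset.mul_sum, mul_div_assoc]

lemma expectation_mono {g h : (Fin n → Bool) → ℝ} (H : ∀ x, g x ≤ h x) :
    expectation g ≤ expectation h := by
  unfold expectation
  rw [div_le_div_iff_of_pos_right (by positivity : (0:ℝ) < 2 ^ n)]
  exact Finset.sum_le_sum fun x _ => H x

lemma abs_expectation_le (g : (Fin n → Bool) → ℝ) :
    |expectation g| ≤ expectation (fun x => |g x|) := by
  unfold expectation
  rw [abs_div, abs_of_nonneg (by positivity : (0:ℝ) ≤ 2 ^ n),
    div_le_div_iff_of_pos_right (by positivity : (0:ℝ) < 2 ^ n)]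
  exact Finset.abs_sum_le_sum_abs _ _

lemma sum_walsh (S : Finset (Fin n)) :
    ∑ x : Fin n → Bool, walsh S x = if S = ∅ then (2:ℝ) ^ n else 0 := by
  set F : Fin n → Bool → ℝ := fun j b => if j ∈ S then (if b then (1:ℝ) else -1) else 1 with hF
  have h1 : ∀ x : Fin n → Bool, walsh S x = ∏ j : Fin n, F j (x j) := by
    intro x
    rw [walsh, hF]
    simp only []
    rw [Finset.prod_ite_mem Finset.univ S, Finset.univ_inter]
  simp_rw [h1]
  have h0 : ∑ x ∈ Fintype.piFinset (fun _ : Fin n => (Finset.univ : Finset Bool)),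
      ∏ j : Fin n, F j (x j) = ∏ j : Fin n, ∑ b : Bool, F j b :=
    (Finset.prod_univ_sum _ _).symm
  rw [Fintype.piFinset_univ] at h0
  rw [h0]
  have h2 : ∀ j : Fin n, (∑ b : Bool, F j b) = if j ∈ S then 0 else 2 := by
    intro j
    by_cases h : j ∈ S <;> simp [hF, h] <;> norm_num
  simp_rw [h2]
  by_cases hS : S = ∅
  · simp [hS]
  · obtain ⟨j, hj⟩ := Finset.nonempty_iff_ne_empty.mpr hS
    rw [if_neg hS]
    exact Finset.prod_eq_zero (Finset.mem_univ j) (by simp [hj])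

lemma walsh_mul_walsh (S T : Finset (Fin n)) (x : Fin n → Bool) :
    walsh S x * walsh T x = walsh (S ∆ T) x := by
  unfold walsh
  have hsub : S ∩ T ⊆ S ∪ T := (Finset.inter_subset_left).trans Finset.subset_union_left
  have hsd : S ∆ T = (S ∪ T) \ (S ∩ T) := by
    rw [symmDiff_eq_sup_sdiff_inf]; rfl
  have hsq : (∏ j ∈ S ∩ T, (if x j then (1:ℝ) else -1))
      * ∏ j ∈ S ∩ T, (if x j then (1:ℝ) else -1) = 1 := by
    rw [← Finset.prod_mul_distrib]
    exact Finset.prod_eq_one fun j _ => by by_cases h : x j <;> simp [h]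
  calc (∏ j ∈ S, (if x j then (1:ℝ) else -1)) * ∏ j ∈ T, (if x j then (1:ℝ) else -1)
      = (∏ j ∈ S ∪ T, (if x j then (1:ℝ) else -1))
        * ∏ j ∈ S ∩ T, (if x j then (1:ℝ) else -1) := (Finset.prod_union_inter).symm
    _ = ((∏ j ∈ (S ∪ T) \ (S ∩ T), (if x j then (1:ℝ) else -1))
        * ∏ j ∈ S ∩ T, (if x j then (1:ℝ) else -1))
        * ∏ j ∈ S ∩ T, (if x j then (1:ℝ) else -1) := by rw [Finset.prod_sdiff hsub]
    _ = ∏ j ∈ S ∆ T, (if x j then (1:ℝ) else -1) := by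
        rw [mul_assoc, hsq, mul_one, hsd]

lemma sum_walsh_mul_walsh (x y : Fin n → Bool) :
    ∑ T : Finset (Fin n), walsh T x * walsh T y = if x = y then (2:ℝ) ^ n else 0 := by
  have h1 : ∀ T : Finset (Fin n), walsh T x * walsh T y
      = ∏ j ∈ T, ((if x j then (1:ℝ) else -1) * (if y j then (1:ℝ) else -1)) := by
    intro T; rw [walsh, walsh, Finset.prod_mul_distrib]
  simp_rw [h1]
  have h2 : ∏ j : Fin n, (((if x j then (1:ℝ) else -1) * (if y j then (1:ℝ) else -1)) + 1)
      = ∑ T ∈ (Finset.univ : Finset (Fin n)).powerset,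
          ∏ j ∈ T, ((if x j then (1:ℝ) else -1) * (if y j then (1:ℝ) else -1)) := by
    rw [Finset.prod_add]
    exact Finset.sum_congr rfl fun T _ => by simp
  rw [Finset.powerset_univ] at h2
  rw [← h2]
  have h3 : ∀ j : Fin n, ((if x j then (1:ℝ) else -1) * (if y j then (1:ℝ) else -1)) + 1
      = if x j = y j then 2 else 0 := by
    intro j; by_cases hx : x j <;> by_cases hy : y j <;> simp [hx, hy] <;> norm_num
  simp_rw [h3]
  by_cases hxy : x = y
  · subst hxy; simp
  · obtain ⟨j, hj⟩ := Function.ne_iff.mp hxy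
    rw [if_neg hxy]
    exact Finset.prod_eq_zero (Finset.mem_univ j) (by simp [hj])

end Aux

section Aux2
open scoped symmDiff

variable {n : ℕ}

lemma parseval (f g : (Fin n → Bool) → ℝ) :
    expectation (fun x => f x * g x) = ∑ T : Finset (Fin n), fwCoeff f T * fwCoeff g T := by
  unfold fwCoeff expectation
  simp_rw [div_mul_div_comm, ← Finset.sum_div]
  have key : ∑ T : Finset (Fin n), (∑ x : Fin n → Bool, f x * walsh T x)
      * (∑ y : Fin n → Bool, g y * walsh T y)
      = (∑ x : Fin n → Bool, f x * g x) * 2 ^ n := by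
    simp_rw [Finset.sum_mul_sum]
    rw [Finset.sum_comm]
    calc ∑ x : Fin n → Bool, ∑ T : Finset (Fin n), ∑ y : Fin n → Bool,
          (f x * walsh T x) * (g y * walsh T y)
        = ∑ x : Fin n → Bool, ∑ y : Fin n → Bool, ∑ T : Finset (Fin n),
          (f x * walsh T x) * (g y * walsh T y) :=
          Finset.sum_congr rfl fun x _ => Finset.sum_comm
      _ = ∑ x : Fin n → Bool, ∑ y : Fin n → Bool,
          (f x * g y) * ∑ T : Finset (Fin n), walsh T x * walsh T y := by
          simp_rw [mul_mul_mul_comm, Finset.mul_sum]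
      _ = (∑ x : Fin n → Bool, f x * g x) * 2 ^ n := by
          simp_rw [sum_walsh_mul_walsh, mul_ite, mul_zero, Finset.sum_ite_eq, Finset.mem_univ,
            if_true, Finset.sum_mul]
  rw [key, mul_div_mul_right _ _ (by positivity : ((2:ℝ) ^ n) ≠ 0)]

lemma expansion (f : (Fin n → Bool) → ℝ) (x : Fin n → Bool) :
    f x = ∑ T : Finset (Fin n), fwCoeff f T * walsh T x := by
  unfold fwCoeff expectation
  simp_rw [div_mul_eq_mul_div, ← Finset.sum_div]
  have key : ∑ T : Finset (Fin n), (∑ y : Fin n → Bool, f y * walsh T y) * walsh T x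
      = f x * 2 ^ n := by
    simp_rw [Finset.sum_mul]
    rw [Finset.sum_comm]
    simp_rw [mul_assoc, ← Finset.mul_sum, sum_walsh_mul_walsh]
    simp
  rw [key, mul_div_assoc, div_self (by positivity : ((2:ℝ) ^ n) ≠ 0), mul_one]

lemma fwCoeff_walsh (V U : Finset (Fin n)) :
    fwCoeff (walsh V) U = if V = U then 1 else 0 := by
  unfold fwCoeff expectation
  simp_rw [walsh_mul_walsh]
  rw [sum_walsh]
  by_cases h : V = U
  · have : V ∆ U = ∅ := by
      rw [← Finset.bot_eq_empty, symmDiff_eq_bot]; exact h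
    simp [h, this, div_self (by positivity : ((2:ℝ) ^ n) ≠ 0)]
  · have : V ∆ U ≠ ∅ := by
      rw [← Finset.bot_eq_empty, Ne, symmDiff_eq_bot]; exact h
    simp [h, this]

lemma walsh_update_of_not_mem {T : Finset (Fin n)} {i : Fin n} (h : i ∉ T)
    (x : Fin n → Bool) (b : Bool) :
    walsh T (Function.update x i b) = walsh T x := by
  unfold walsh
  refine Finset.prod_congr rfl fun j hj => ?_
  rw [Function.update_of_ne (by rintro rfl; exact h hj)]

lemma deriv1_walsh (i : Fin n) (T : Finset (Fin n)) (x : Fin n → Bool) :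
    deriv1 i (walsh T) x = if i ∈ T then walsh (T.erase i) x else 0 := by
  unfold deriv1
  by_cases h : i ∈ T
  · have hw : ∀ b : Bool, walsh T (Function.update x i b)
        = (if b then (1:ℝ) else -1) * walsh (T.erase i) x := by
      intro b
      have h1 : walsh T (Function.update x i b)
          = (if Function.update x i b i then (1:ℝ) else -1)
            * walsh (T.erase i) (Function.update x i b) := by
        unfold walsh
        rw [← Finset.mul_prod_erase T _ h]
      rw [h1, Function.update_self, walsh_update_of_not_mem (Finset.notMem_erase i T)]
    rw [hw, hw, if_pos h]
    simp only [if_pos, Bool.false_eq_true, if_false]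
    ring
  · rw [walsh_update_of_not_mem h, walsh_update_of_not_mem h, if_neg h, sub_self, zero_div]

end Aux2

section Aux3

variable {n : ℕ}

lemma fwCoeff_deriv1 (g : (Fin n → Bool) → ℝ) (i : Fin n) (U : Finset (Fin n)) :
    fwCoeff (deriv1 i g) U = if i ∈ U then 0 else fwCoeff g (insert i U) := by
  have hd : ∀ x, deriv1 i g x
      = ∑ T : Finset (Fin n), fwCoeff g T * (if i ∈ T then walsh (T.erase i) x else 0) := by
    intro x
    have h1 : ∀ b : Bool, g (Function.update x i b)
        = ∑ T : Finset (Fin n), fwCoeff g T * walsh T (Function.update x i b) :=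
      fun b => expansion g _
    show (g (Function.update x i true) - g (Function.update x i false)) / 2 = _
    rw [h1, h1, ← Finset.sum_sub_distrib, Finset.sum_div]
    refine Finset.sum_congr rfl fun T _ => ?_
    rw [← deriv1_walsh i T x]
    show _ = fwCoeff g T * ((walsh T (Function.update x i true)
      - walsh T (Function.update x i false)) / 2)
    ring
  conv_lhs => rw [fwCoeff]
  simp_rw [hd, Finset.sum_mul]
  rw [expectation_sum]
  have h2 : ∀ T : Finset (Fin n),
      expectation (fun x => (fwCoeff g T * (if i ∈ T then walsh (T.erase i) x else 0)) * walsh U x)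
      = fwCoeff g T * (if i ∈ T ∧ T.erase i = U then 1 else 0) := by
    intro T
    by_cases h : i ∈ T
    · simp only [h, if_pos, true_and]
      have hw := fwCoeff_walsh (T.erase i) U
      unfold fwCoeff at hw
      simp_rw [mul_assoc]
      rw [expectation_const_mul, hw]
    · simp only [h, if_neg, false_and, if_false, mul_zero, zero_mul]
      simp [expectation]
  simp_rw [h2]
  by_cases hiU : i ∈ U
  · rw [if_pos hiU]
    refine Finset.sum_eq_zero fun T _ => ?_
    have : ¬ (i ∈ T ∧ T.erase i = U) := by
      rintro ⟨h1, h2⟩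
      exact Finset.notMem_erase i T (h2 ▸ hiU)
    simp [this]
  · rw [if_neg hiU]
    rw [Finset.sum_eq_single (insert i U)]
    · simp [Finset.mem_insert_self, Finset.erase_insert hiU]
    · intro T _ hT
      have : ¬ (i ∈ T ∧ T.erase i = U) := by
        rintro ⟨h1, h2⟩
        exact hT (by rw [← h2, Finset.insert_erase h1])
      simp [this]
    · intro h; exact absurd (Finset.mem_univ _) h

lemma fwCoeff_foldr (f : (Fin n → Bool) → ℝ) :
    ∀ (l : List (Fin n)), l.Nodup → ∀ U : Finset (Fin n),
      fwCoeff (l.foldr deriv1 f) U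
        = if ∀ i ∈ l, i ∉ U then fwCoeff f (U ∪ l.toFinset) else 0
  | [], _, U => by simp
  | i :: l, hnd, U => by
    rw [List.foldr_cons, fwCoeff_deriv1]
    rw [List.nodup_cons] at hnd
    by_cases hiU : i ∈ U
    · rw [if_pos hiU, if_neg]
      push_neg
      exact ⟨i, List.mem_cons_self, hiU⟩
    · rw [if_neg hiU, fwCoeff_foldr f l hnd.2 (insert i U)]
      by_cases hc : ∀ j ∈ l, j ∉ U
      · have hc' : ∀ j ∈ l, j ∉ insert i U := by
          intro j hj
          rw [Finset.mem_insert]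
          rintro (rfl | h)
          · exact hnd.1 hj
          · exact hc j hj h
        rw [if_pos hc', if_pos]
        · congr 1
          rw [List.toFinset_cons]
          ext a
          simp only [Finset.mem_union, Finset.mem_insert]
          tauto
        · intro j hj
          rcases List.mem_cons.mp hj with rfl | hj
          · exact hiU
          · exact hc j hj
      · push_neg at hc
        obtain ⟨j, hj, hjU⟩ := hc
        rw [if_neg, if_neg]
        · push_neg
          exact ⟨j, List.mem_cons_of_mem i hj, hjU⟩
        · push_neg
          exact ⟨j, hj, Finset.mem_insert_of_mem hjU⟩

lemma fwCoeff_derivS (f : (Fin n → Bool) → ℝ) (S U : Finset (Fin n)) :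
    fwCoeff (derivS S f) U = if ∀ i ∈ S, i ∉ U then fwCoeff f (U ∪ S) else 0 := by
  have h := fwCoeff_foldr f S.toList S.nodup_toList U
  unfold derivS
  rw [h, S.toList_toFinset]
  simp only [Finset.mem_toList]

lemma expectation_derivS (f : (Fin n → Bool) → ℝ) (S : Finset (Fin n)) :
    expectation (derivS S f) = fwCoeff f S := by
  have h : expectation (derivS S f) = fwCoeff (derivS S f) ∅ := by
    unfold fwCoeff
    congr 1
    funext x
    simp [walsh]
  rw [h, fwCoeff_derivS]
  simp

lemma expectation_derivS_sq (f : (Fin n → Bool) → ℝ) (S : Finset (Fin n)) :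
    expectation (fun x => derivS S f x ^ 2) = TInf f S := by
  have h1 : expectation (fun x => derivS S f x ^ 2)
      = ∑ T : Finset (Fin n), fwCoeff (derivS S f) T * fwCoeff (derivS S f) T := by
    simp_rw [sq]
    exact parseval _ _
  rw [h1]
  have hsq : ∀ (c : Prop) [Decidable c] (a : ℝ),
      (if c then a else 0) * (if c then a else 0) = if c then a ^ 2 else 0 := by
    intro c _ a; by_cases h : c <;> simp [h, sq]
  simp_rw [fwCoeff_derivS, hsq]
  rw [Finset.sum_ite, Finset.sum_const, smul_zero, add_zero]
  unfold TInf
  refine Finset.sum_nbij' (fun U => U ∪ S) (fun T => T \ S) ?_ ?_ ?_ ?_ ?_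
  · intro U hU
    simp only [Finset.mem_filter, Finset.mem_univ, true_and]
    exact Finset.subset_union_right
  · intro T hT
    simp only [Finset.mem_filter, Finset.mem_univ, true_and] at hT ⊢
    intro i hi
    exact fun h => (Finset.mem_sdiff.mp h).2 hi
  · intro U hU
    simp only [Finset.mem_filter, Finset.mem_univ, true_and] at hU
    show (U ∪ S) \ S = U
    rw [Finset.union_sdiff_right]
    exact Finset.sdiff_eq_self_iff_disjoint.mpr
      (Finset.disjoint_left.mpr fun a ha hb => hU _ hb ha)
  · intro T hT
    simp only [Finset.mem_filter, Finset.mem_univ, true_and] at hT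
    show T \ S ∪ S = T
    rw [Finset.sdiff_union_self_eq_union, Finset.union_eq_left.mpr hT]
  · intro U hU
    rfl

end Aux3

section Aux4

variable {n : ℕ}

lemma foldr_diff_int (f : (Fin n → Bool) → ℝ) (hf : ∀ x, f x = 1 ∨ f x = -1) :
    ∀ l : List (Fin n), ∀ x y : Fin n → Bool, ∃ m : ℤ,
      (2:ℝ) ^ l.length * ((l.foldr deriv1 f) x - (l.foldr deriv1 f) y) = 2 * m
  | [], x, y => by
    rcases hf x with h1 | h1 <;> rcases hf y with h2 | h2
    · exact ⟨0, by simp [h1, h2]⟩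
    · exact ⟨1, by simp [h1, h2]; norm_num⟩
    · exact ⟨-1, by simp [h1, h2]; norm_num⟩
    · exact ⟨0, by simp [h1, h2]⟩
  | i :: l, x, y => by
    obtain ⟨m1, hm1⟩ := foldr_diff_int f hf l (Function.update x i true) (Function.update y i true)
    obtain ⟨m2, hm2⟩ := foldr_diff_int f hf l (Function.update x i false) (Function.update y i false)
    refine ⟨m1 - m2, ?_⟩
    simp only [List.foldr_cons, List.length_cons]
    show (2:ℝ) ^ (l.length + 1) *
      ((((l.foldr deriv1 f) (Function.update x i true)
          - (l.foldr deriv1 f) (Function.update x i false)) / 2)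
        - (((l.foldr deriv1 f) (Function.update y i true)
          - (l.foldr deriv1 f) (Function.update y i false)) / 2)) = 2 * (↑(m1 - m2))
    push_cast
    rw [pow_succ]
    linear_combination hm1 - hm2

lemma foldr_val_int (f : (Fin n → Bool) → ℝ) (hf : ∀ x, f x = 1 ∨ f x = -1)
    (i : Fin n) (l : List (Fin n)) (x : Fin n → Bool) :
    ∃ m : ℤ, (2:ℝ) ^ l.length * (((i :: l).foldr deriv1 f) x) = m := by
  obtain ⟨m, hm⟩ := foldr_diff_int f hf l (Function.update x i true) (Function.update x i false)
  refine ⟨m, ?_⟩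
  simp only [List.foldr_cons]
  show (2:ℝ) ^ l.length * (((l.foldr deriv1 f) (Function.update x i true)
      - (l.foldr deriv1 f) (Function.update x i false)) / 2) = m
  linear_combination hm / 2

end Aux4

/-- `Inf_S(f) ≥ 2^{-(r-1)} |f̂(S)|`. -/
theorem statement7 (n : ℕ) (f : (Fin n → Bool) → ℝ) (hf : ∀ x, f x = 1 ∨ f x = -1)
    (S : Finset (Fin n)) (hS : S.Nonempty) :
    TInf f S ≥ (1 / 2 ^ (S.card - 1)) * |fwCoeff f S| := by
  obtain ⟨i, l, hl⟩ : ∃ i l, S.toList = i :: l := by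
    cases h : S.toList with
    | nil =>
      exfalso
      have := S.length_toList
      rw [h] at this
      simp at this
      exact hS.ne_empty (Finset.card_eq_zero.mp this.symm)
    | cons i l => exact ⟨i, l, rfl⟩
  have hlen : l.length = S.card - 1 := by
    have h := S.length_toList
    rw [hl] at h
    simp only [List.length_cons] at h
    omega
  set g : (Fin n → Bool) → ℝ := derivS S f with hg
  have hgl : ∀ x, g x = ((i :: l).foldr deriv1 f) x := by
    intro x; rw [hg]; unfold derivS; rw [hl]
  have hpt : ∀ x, (1 / (2:ℝ) ^ l.length) * |g x| ≤ g x ^ 2 := by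
    intro x
    obtain ⟨m, hm⟩ := foldr_val_int f hf i l x
    rw [← hgl x] at hm
    have h2pos : (0:ℝ) < 2 ^ l.length := by positivity
    have hgx : g x = (m : ℝ) / 2 ^ l.length := by
      field_simp
      linarith [hm]
    rcases eq_or_ne m 0 with h0 | h0
    · simp [hgx, h0]
    · have h1 : (1:ℝ) ≤ |(m:ℝ)| := by exact_mod_cast Int.one_le_abs h0
      have h2 : (1 / (2:ℝ) ^ l.length) ≤ |g x| := by
        rw [hgx, abs_div, abs_of_nonneg (le_of_lt h2pos)]
        gcongr
      calc (1 / (2:ℝ) ^ l.length) * |g x| ≤ |g x| * |g x| :=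
            mul_le_mul_of_nonneg_right h2 (abs_nonneg _)
        _ = g x ^ 2 := by rw [abs_mul_abs_self, sq]
  have hchain : TInf f S ≥ (1 / (2:ℝ) ^ l.length) * |fwCoeff f S| := by
    have e1 : TInf f S = expectation (fun x => g x ^ 2) :=
      (expectation_derivS_sq f S).symm
    have e2 : expectation (fun x => (1 / (2:ℝ) ^ l.length) * |g x|)
        ≤ expectation (fun x => g x ^ 2) := expectation_mono hpt
    have e3 : expectation (fun x => (1 / (2:ℝ) ^ l.length) * |g x|)
        = (1 / (2:ℝ) ^ l.length) * expectation (fun x => |g x|) :=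
      expectation_const_mul _ _
    have e4 : |fwCoeff f S| ≤ expectation (fun x => |g x|) := by
      rw [← expectation_derivS f S]
      exact abs_expectation_le g
    have e5 : (1 / (2:ℝ) ^ l.length) * |fwCoeff f S|
        ≤ (1 / (2:ℝ) ^ l.length) * expectation (fun x => |g x|) :=
      mul_le_mul_of_nonneg_left e4 (by positivity)
    rw [ge_iff_le, e1]
    calc (1 / (2:ℝ) ^ l.length) * |fwCoeff f S| ≤ _ := e5
      _ = _ := e3.symm
      _ ≤ _ := e2
  rw [hlen] at hchain
  exact hchain
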